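/- For every n with 2 ≤ n ≤ N, the polynomial Ĉ_n := ∑_{i=0}^{n} ∑_{k=0}^{n−i} ((−1)^k/(2^k·k!)) · S^{(k)}(n−i) · x_i · x_1^k · x_0^{n−k} ∈ ℚ[x_0,…,x_N] lies in the kernel of the first Kravchuk derivation: D_{K1}(Ĉ_n) = 0. (Ĉ_n equals x_0 times the Cayley element C_n of D_{K1}, up to the nonzero rational factor n·(n−2)!.) -/

import Mathlib

/-!
Let `c_t` be the coefficients of `D_{K1}` and `A = ∑ c_t X^t = artanh X`. Since
`log(1 + X)^k = k! ∑_m s(m,k) X^m / m!` and `1 + 2X/(1-X) = (1+X)/(1-X)`, the numbers `S^{(k)}(n)`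
are the coefficients of `log((1+X)/(1-X))^k = (2A)^k`; both sides are pinned down by the
differential equation `(1 - X²) F_k' = 2k F_{k-1}`.

Consequently `Ĉ_n` is the coefficient of `z^n` in `F · G`, where `F = ∑ x_i x_0^i z^i` and
`G = ∑_r Q_r z^r` with `Q_r = ∑_k [z^r]((-A)^k / k!) x_1^k x_0^(r-k)`, formally
`exp(-x_1 A(x_0 z) / x_0)`. Applying `D_{K1}` coefficientwise, `D F = H F` and `D G = -H G`
for `H = A(x_0 z)`, because `D x_0 = 0` and `D x_1 = x_0`; hence `D (F G) = 0`.
-/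

/-- The variable `x_i` of `ℚ[x_0,…,x_N]` (for `i ≤ N`). -/
noncomputable def Xv (N : ℕ) (i : ℕ) : MvPolynomial (Fin (N + 1)) ℚ :=
  if h : i ≤ N then MvPolynomial.X ⟨i, Nat.lt_succ_of_le h⟩ else 0

/-- The first Kravchuk derivation: `D_{K1}(x_0)=0`,
`D_{K1}(x_m)=∑_{i=1}^m ((1-(-1)^i)/(2i)) x_{m-i}`. -/
noncomputable def DK1 (N : ℕ) :
    Derivation ℚ (MvPolynomial (Fin (N + 1)) ℚ) (MvPolynomial (Fin (N + 1)) ℚ) :=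
  MvPolynomial.mkDerivation ℚ fun m : Fin (N + 1) =>
    ∑ i ∈ Finset.Icc 1 (m : ℕ),
      MvPolynomial.C ((1 - (-1 : ℚ) ^ i) / (2 * i)) * Xv N ((m : ℕ) - i)

/-- Signed Stirling numbers of the first kind: `t(t-1)⋯(t-m+1) = ∑_k s(m,k) t^k`. -/
noncomputable def stirling1 (m k : ℕ) : ℚ := (descPochhammer ℚ m).coeff k

/-- `S^{(k)}(n) = ∑_{m=k}^n binom(n-1,m-1) (2^m k!/m!) s(m,k)` for `k ≥ 1` (zero for
`n < k`), with `S^{(0)}(n) = 1` if `n = 0` and `0` otherwise. -/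
noncomputable def Sfun (k n : ℕ) : ℚ :=
  if k = 0 then (if n = 0 then 1 else 0)
  else ∑ m ∈ Finset.Icc k n,
    ((n - 1).choose (m - 1) : ℚ) * (2 ^ m * (Nat.factorial k) / (Nat.factorial m))
      * stirling1 m k

/-- The (normalized) Cayley element
`Ĉ_n = ∑_{i=0}^n ∑_{k=0}^{n-i} ((-1)^k/(2^k k!)) S^{(k)}(n-i) x_i x_1^k x_0^{n-k}`. -/
noncomputable def Chat (N n : ℕ) : MvPolynomial (Fin (N + 1)) ℚ :=
  ∑ i ∈ Finset.range (n + 1), ∑ k ∈ Finset.range (n - i + 1),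
    MvPolynomial.C ((-1 : ℚ) ^ k / (2 ^ k * (Nat.factorial k)) * Sfun k (n - i))
      * Xv N i * (Xv N 1) ^ k * (Xv N 0) ^ (n - k)

open PowerSeries Finset
open scoped Nat

lemma stirling1_succ_succ (m k : ℕ) :
    stirling1 (m + 1) (k + 1) = stirling1 m k - m * stirling1 m (k + 1) := by
  simp only [stirling1, descPochhammer_succ_right, mul_sub, Polynomial.coeff_sub,
    Polynomial.coeff_mul_X, Polynomial.coeff_mul_natCast, sub_right_inj]
  ring

lemma stirling1_zero_right_of_ne_zero {m : ℕ} (hm : m ≠ 0) : stirling1 m 0 = 0 := by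
  obtain ⟨m, rfl⟩ := Nat.exists_eq_succ_of_ne_zero hm
  simp [stirling1, descPochhammer_succ_left, Polynomial.coeff_zero_eq_eval_zero]

lemma stirling1_eq_zero_of_lt {m k : ℕ} (h : m < k) : stirling1 m k = 0 :=
  Polynomial.coeff_eq_zero_of_natDegree_lt (by rwa [descPochhammer_natDegree])

-- `k! ∑ s(m,k) X^m / m!`, the series of `log(1 + X)^k`.
noncomputable def stirlingSeries (k : ℕ) : ℚ⟦X⟧ :=
  mk fun m => k ! * stirling1 m k / m !

lemma stirlingSeries_zero : stirlingSeries 0 = 1 := by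
  ext m
  rcases eq_or_ne m 0 with rfl | hm
  · simp [stirlingSeries, stirling1]
  · simp [stirlingSeries, stirling1_zero_right_of_ne_zero hm, coeff_one, hm]

lemma one_add_X_mul_derivative_stirlingSeries (k : ℕ) :
    (1 + X) * d⁄dX ℚ (stirlingSeries (k + 1)) = (k + 1 : ℚ) • stirlingSeries k := by
  ext n
  rw [add_mul, one_mul, map_add, coeff_derivative, coeff_smul]
  rcases n with _ | n
  · rw [coeff_zero_X_mul, add_zero]
    simp only [stirlingSeries, coeff_mk, smul_eq_mul, stirling1_succ_succ 0 k, Nat.factorial_succ]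
    push_cast
    ring
  · rw [coeff_succ_X_mul, coeff_derivative]
    simp only [stirlingSeries, coeff_mk, smul_eq_mul, stirling1_succ_succ (n + 1) k,
      Nat.factorial_succ]
    push_cast
    field_simp
    ring

-- `∑ c_t X^t` for the coefficients `c_t` of `D_{K1}`; division by zero makes `c_0 = 0`.
noncomputable def artanhSeries : ℚ⟦X⟧ := mk fun t => (1 - (-1 : ℚ) ^ t) / (2 * t)

lemma coeff_derivative_artanhSeries (n : ℕ) :
    coeff n (d⁄dX ℚ artanhSeries) = (1 - (-1 : ℚ) ^ (n + 1)) / 2 := by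
  rw [coeff_derivative, artanhSeries, coeff_mk]
  field_simp
  push_cast
  ring

lemma one_sub_X_sq_mul_derivative_artanhSeries :
    (1 - X ^ 2) * d⁄dX ℚ artanhSeries = 1 := by
  ext n
  rw [sub_mul, one_mul, map_sub, coeff_X_pow_mul', coeff_one]
  rcases n with _ | _ | n <;> simp [coeff_derivative_artanhSeries, pow_succ]

lemma derivative_two : d⁄dX ℚ (2 : ℚ⟦X⟧) = 0 := (d⁄dX ℚ).map_natCast 2

noncomputable def twoXDivOneSubX : ℚ⟦X⟧ := 2 * X * PowerSeries.mk 1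

lemma one_sub_X_mul_twoXDivOneSubX : (1 - X) * twoXDivOneSubX = 2 * X := by
  rw [twoXDivOneSubX, mul_left_comm, mul_comm (1 - X), mk_one_mul_one_sub_eq_one, mul_one]

lemma one_sub_X_sq_mul_derivative_twoXDivOneSubX :
    (1 - X ^ 2) * d⁄dX ℚ twoXDivOneSubX = 2 * (1 + twoXDivOneSubX) := by
  have h := one_sub_X_mul_twoXDivOneSubX
  have hd := congrArg (d⁄dX ℚ) h
  simp only [Derivation.leibniz, smul_eq_mul, map_sub, Derivation.map_one_eq_zero, derivative_X,
    zero_sub, mul_neg, mul_one, derivative_two, mul_zero, add_zero] at hd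
  linear_combination (1 + X) * hd - h

lemma coeff_twoXDivOneSubX_pow {d : ℕ} (hd : d ≠ 0) (n : ℕ) :
    coeff n (twoXDivOneSubX ^ d)
      = if d ≤ n then 2 ^ d * ((n - 1).choose (d - 1) : ℚ) else 0 := by
  obtain ⟨d, rfl⟩ := Nat.exists_eq_succ_of_ne_zero hd
  rw [twoXDivOneSubX, mul_pow, mul_pow, mk_one_pow_eq_mk_choose_add, mul_assoc,
    ← map_ofNat C, ← map_pow, coeff_C_mul, coeff_X_pow_mul']
  split_ifs with hdn
  · rw [coeff_mk, show d + (n - (d + 1)) = n - 1 by omega]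
    rfl
  · simp

lemma constantCoeff_twoXDivOneSubX : constantCoeff twoXDivOneSubX = 0 := by
  simp [twoXDivOneSubX]

lemma hasSubst_twoXDivOneSubX : HasSubst twoXDivOneSubX :=
  HasSubst.of_constantCoeff_zero' constantCoeff_twoXDivOneSubX

lemma stirlingSeries_subst_twoXDivOneSubX (k : ℕ) :
    (stirlingSeries k).subst twoXDivOneSubX = (2 * artanhSeries) ^ k := by
  have hM := hasSubst_twoXDivOneSubX
  have hX : substAlgHom hM (X : ℚ⟦X⟧) = twoXDivOneSubX := substAlgHom_X hM
  rw [← coe_substAlgHom hM]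
  induction k with
  | zero => rw [stirlingSeries_zero, map_one, pow_zero]
  | succ k ih =>
    refine derivative.ext (mul_left_cancel₀ (a := 1 - X ^ 2) ?_ ?_) ?_
    · intro h
      simpa using congrArg constantCoeff h
    · calc (1 - X ^ 2) * d⁄dX ℚ (substAlgHom hM (stirlingSeries (k + 1)))
          = substAlgHom hM (d⁄dX ℚ (stirlingSeries (k + 1))) * (2 * (1 + twoXDivOneSubX)) := by
            rw [coe_substAlgHom, derivative_subst hM, ← coe_substAlgHom hM,
              ← one_sub_X_sq_mul_derivative_twoXDivOneSubX]
            ring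
        _ = 2 * substAlgHom hM ((1 + X) * d⁄dX ℚ (stirlingSeries (k + 1))) := by
            rw [map_mul, map_add, map_one, hX]; ring
        _ = (1 - X ^ 2) * d⁄dX ℚ ((2 * artanhSeries) ^ (k + 1)) := by
            rw [one_add_X_mul_derivative_stirlingSeries, map_smul, ih, derivative_pow,
              Derivation.leibniz, derivative_two, smul_zero, add_zero, smul_eq_mul,
              Algebra.smul_def, map_add, map_natCast, map_one, Nat.add_sub_cancel]
            push_cast
            linear_combination (-2 * (k + 1) * (2 * artanhSeries) ^ k) *
              one_sub_X_sq_mul_derivative_artanhSeries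
    · rw [coe_substAlgHom]
      refine (constantCoeff_subst_eq_zero constantCoeff_twoXDivOneSubX _ ?_).trans ?_
      · simp [stirlingSeries, stirling1_eq_zero_of_lt]
      · simp [artanhSeries]

lemma Sfun_eq_coeff_pow (k n : ℕ) : Sfun k n = coeff n ((2 * artanhSeries) ^ k) := by
  rcases eq_or_ne k 0 with rfl | hk
  · simp [Sfun, coeff_one]
  rw [← stirlingSeries_subst_twoXDivOneSubX, coeff_subst' hasSubst_twoXDivOneSubX,
    finsum_eq_sum_of_support_subset (s := Icc k n), Sfun, if_neg hk]
  · refine sum_congr rfl fun m hm => ?_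
    rw [mem_Icc] at hm
    rw [coeff_twoXDivOneSubX_pow (by omega), if_pos hm.2, stirlingSeries, coeff_mk, smul_eq_mul]
    ring
  · intro m hm
    rw [Function.mem_support] at hm
    simp only [coe_Icc, Set.mem_Icc]
    by_contra! h
    refine hm ?_
    rcases lt_or_ge m k with hmk | hkm
    · simp [stirlingSeries, stirling1_eq_zero_of_lt hmk]
    · simp [coeff_twoXDivOneSubX_pow (show m ≠ 0 by omega), h hkm]

noncomputable def cayleyCoeff (k r : ℕ) : ℚ := (-1) ^ k / (2 ^ k * k !) * Sfun k r

lemma cayleyCoeff_eq_zero_of_lt {k r : ℕ} (h : r < k) : cayleyCoeff k r = 0 := by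
  rw [cayleyCoeff, Sfun, if_neg (by omega), Icc_eq_empty (by omega), sum_empty, mul_zero]

lemma succ_mul_cayleyCoeff_succ (k r : ℕ) :
    (k + 1) * cayleyCoeff (k + 1) r
      = -∑ p ∈ antidiagonal r, coeff p.1 artanhSeries * cayleyCoeff k p.2 := by
  have hS : Sfun (k + 1) r = 2 * ∑ p ∈ antidiagonal r, coeff p.1 artanhSeries * Sfun k p.2 := by
    have h : (2 * artanhSeries) ^ (k + 1) = C 2 * (artanhSeries * (2 * artanhSeries) ^ k) := by
      rw [map_ofNat]; ring
    rw [Sfun_eq_coeff_pow, h, coeff_C_mul, coeff_mul]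
    simp only [Sfun_eq_coeff_pow]
  simp only [cayleyCoeff, hS, mul_sum, ← sum_neg_distrib, Nat.factorial_succ]
  refine sum_congr rfl fun p _ => ?_
  push_cast
  field_simp
  ring

section Derivation

variable {R : Type*} [CommRing R] [Algebra ℚ R]

-- The `Q_r` of the proof idea, with `u = x_1` and `y = x_0`.
noncomputable def cayleyFactor (u y : R) (r : ℕ) : R :=
  ∑ k ∈ range (r + 1), cayleyCoeff k r • (u ^ k * y ^ (r - k))

lemma pow_mul_cayleyFactor (u y : R) (t s : ℕ) :
    y ^ t * cayleyFactor u y s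
      = ∑ k ∈ range (t + s + 1), cayleyCoeff k s • (u ^ k * y ^ (t + s - k)) := by
  rw [cayleyFactor, mul_sum]
  refine sum_subset_zero_on_sdiff (range_subset_range.2 (by omega)) ?_ ?_
  · intro k hk
    simp only [mem_sdiff, mem_range] at hk
    rw [cayleyCoeff_eq_zero_of_lt (by omega), zero_smul]
  · intro k hk
    rw [mem_range] at hk
    rw [mul_smul_comm, mul_left_comm, ← pow_add, show t + (s - k) = t + s - k by omega]

lemma derivation_cayleyFactor (D : Derivation ℚ R R) {u y : R} (hy : D y = 0) (hu : D u = y)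
    (r : ℕ) :
    D (cayleyFactor u y r)
      = -∑ p ∈ antidiagonal r, coeff p.1 artanhSeries • (y ^ p.1 * cayleyFactor u y p.2) := by
  have hD : ∀ k j : ℕ, D (u ^ (k + 1) * y ^ j) = (k + 1) • (u ^ k * y ^ (j + 1)) := by
    intro k j
    simp only [Derivation.leibniz, Derivation.leibniz_pow, hy, hu, smul_eq_mul,
      Nat.add_sub_cancel, nsmul_eq_mul]
    ring
  calc D (cayleyFactor u y r)
      = ∑ k ∈ range r, ((k + 1) * cayleyCoeff (k + 1) r) • (u ^ k * y ^ (r - k)) := by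
        rw [cayleyFactor, map_sum, sum_range_succ']
        simp only [pow_zero, one_mul, D.map_smul, Derivation.leibniz_pow, hy, smul_zero, add_zero]
        refine sum_congr rfl fun k hk => ?_
        rw [mem_range] at hk
        rw [hD, ← Nat.cast_smul_eq_nsmul ℚ, smul_smul,
          show r - (k + 1) + 1 = r - k by omega, mul_comm]
        push_cast
        rfl
    _ = ∑ k ∈ range (r + 1), ((k + 1) * cayleyCoeff (k + 1) r) • (u ^ k * y ^ (r - k)) := by
        rw [sum_range_succ, cayleyCoeff_eq_zero_of_lt (Nat.lt_succ_self r), mul_zero, zero_smul,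
          add_zero]
    _ = -∑ k ∈ range (r + 1), ∑ p ∈ antidiagonal r,
          (coeff p.1 artanhSeries * cayleyCoeff k p.2) • (u ^ k * y ^ (r - k)) := by
        simp only [succ_mul_cayleyCoeff_succ, neg_smul, sum_smul, sum_neg_distrib]
    _ = _ := by
        rw [sum_comm]
        congr 1
        refine sum_congr rfl fun p hp => ?_
        rw [HasAntidiagonal.mem_antidiagonal] at hp
        rw [pow_mul_cayleyFactor, hp, smul_sum]
        simp only [smul_smul]

end Derivation

lemma derivation_coeff_mul_eq_zero {S A : Type*} [CommSemiring S] [CommRing A] [Algebra S A]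
    (D : Derivation S A A) {f g h : A⟦X⟧} {n : ℕ}
    (hf : ∀ i ≤ n, D (coeff i f) = coeff i (h * f))
    (hg : ∀ i ≤ n, D (coeff i g) = -coeff i (h * g)) :
    D (coeff n (f * g)) = 0 :=
  calc D (coeff n (f * g))
      = ∑ p ∈ antidiagonal n,
          (coeff p.1 (h * f) * coeff p.2 g - coeff p.1 f * coeff p.2 (h * g)) := by
        rw [coeff_mul, map_sum]
        refine sum_congr rfl fun p hp => ?_
        have hp := HasAntidiagonal.mem_antidiagonal.1 hp
        rw [D.leibniz, hf _ (by omega), hg _ (by omega), smul_eq_mul, smul_eq_mul]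
        ring
    _ = coeff n (h * f * g - f * (h * g)) := by rw [map_sub, coeff_mul, coeff_mul, sum_sub_distrib]
    _ = 0 := by rw [show h * f * g - f * (h * g) = 0 by ring, map_zero]

lemma DK1_Xv {N i : ℕ} (hi : i ≤ N) :
    DK1 N (Xv N i) = ∑ p ∈ antidiagonal i, coeff p.1 artanhSeries • Xv N p.2 := by
  rw [Xv, dif_pos hi, DK1, MvPolynomial.mkDerivation_X,
    Nat.sum_antidiagonal_eq_sum_range_succ (fun t s => coeff t artanhSeries • Xv N s),
    sum_range_succ', ← Ico_add_one_right_eq_Icc, sum_Ico_eq_sum_range]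
  simp [artanhSeries, MvPolynomial.C_mul', add_comm 1]

lemma DK1_Xv_zero (N : ℕ) : DK1 N (Xv N 0) = 0 := by
  simp [DK1_Xv (Nat.zero_le N), artanhSeries]

lemma DK1_Xv_one {N : ℕ} (hN : 1 ≤ N) : DK1 N (Xv N 1) = Xv N 0 := by
  simp [DK1_Xv hN, artanhSeries, Nat.antidiagonal_succ]

lemma Chat_eq_coeff_mul (N n : ℕ) :
    Chat N n = coeff n (PowerSeries.mk (fun i => Xv N i * Xv N 0 ^ i)
      * PowerSeries.mk (cayleyFactor (Xv N 1) (Xv N 0))) := by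
  rw [coeff_mul, Nat.sum_antidiagonal_eq_sum_range_succ (fun i j => coeff i _ * coeff j _), Chat]
  refine sum_congr rfl fun i hi => ?_
  rw [coeff_mk, coeff_mk, cayleyFactor, mul_sum]
  refine sum_congr rfl fun k hk => ?_
  rw [mem_range] at hi hk
  rw [MvPolynomial.C_mul', cayleyCoeff, show n - k = i + (n - i - k) by omega, pow_add]
  simp only [smul_mul_assoc, mul_smul_comm]
  ring_nf

/-- For `2 ≤ n ≤ N` the Cayley element `Ĉ_n` lies in the kernel of `D_{K1}`. -/
theorem DK1_Chat_eq_zero (N n : ℕ) (h2 : 2 ≤ n) (hn : n ≤ N) :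
    DK1 N (Chat N n) = 0 := by
  rw [Chat_eq_coeff_mul]
  refine derivation_coeff_mul_eq_zero (DK1 N)
    (h := PowerSeries.mk fun t => coeff t artanhSeries • Xv N 0 ^ t) (fun i hi => ?_)
    (fun r _ => ?_)
  · rw [coeff_mk, coeff_mul, Derivation.leibniz, Derivation.leibniz_pow, DK1_Xv_zero,
      DK1_Xv (by omega)]
    simp only [smul_zero, zero_add, smul_sum]
    refine sum_congr rfl fun p hp => ?_
    rw [coeff_mk, coeff_mk, ← HasAntidiagonal.mem_antidiagonal.1 hp, pow_add]
    simp only [smul_eq_mul, Algebra.smul_def]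
    ring
  · rw [coeff_mk, derivation_cayleyFactor _ (DK1_Xv_zero N) (DK1_Xv_one (by omega)), coeff_mul]
    simp
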